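/- arXiv:2412.05164 — 3 statements merged into one kernel-verified Lean document; each statement's English description precedes it below -/
import Mathlib

section
/- For every real b > 0, all reals s, s', and every measurable set A ⊆ ℝ, the output distributions of the Laplace mechanism at the two inputs satisfy ∫_A (1/(2b))·exp(−|x − s|/b) dx ≤ exp(|s − s'|/b) · ∫_A (1/(2b))·exp(−|x − s'|/b) dx. -/
open MeasureTheory Set

lemma integrable_exp_neg_abs_div {b : ℝ} (hb : 0 < b) :
    Integrable fun x : ℝ => Real.exp (-|x| / b) := by
  rw [← integrableOn_univ, ← Iic_union_Ioi (a := 0)]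
  refine IntegrableOn.union ?_ ?_
  · refine (integrableOn_exp_mul_Iic (inv_pos.2 hb) 0).congr_fun (fun x hx => ?_)
      measurableSet_Iic
    rw [abs_of_nonpos hx, neg_neg, div_eq_inv_mul]
  · refine (integrableOn_exp_mul_Ioi (neg_lt_zero.2 (inv_pos.2 hb)) 0).congr_fun
      (fun x hx => ?_) measurableSet_Ioi
    rw [abs_of_pos hx, neg_div, div_eq_inv_mul, ← neg_mul]

lemma laplace_density_le_exp_mul {b : ℝ} (hb : 0 ≤ b) (x s s' : ℝ) :
    1 / (2 * b) * Real.exp (-|x - s| / b) ≤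
      Real.exp (|s - s'| / b) * (1 / (2 * b) * Real.exp (-|x - s'| / b)) := by
  rw [mul_left_comm, ← Real.exp_add, ← add_div]
  gcongr
  linarith [abs_sub_le x s s']

theorem laplace_mechanism_dp_general (b : ℝ) (hb : 0 < b) (s s' : ℝ) (A : Set ℝ) :
    ∫ x in A, (1 / (2 * b)) * Real.exp (-|x - s| / b) ≤
      Real.exp (|s - s'| / b) *
        ∫ x in A, (1 / (2 * b)) * Real.exp (-|x - s'| / b) := by
  have hdensity : ∀ t : ℝ,
      Integrable fun x : ℝ => 1 / (2 * b) * Real.exp (-|x - t| / b) := fun t =>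
    ((integrable_exp_neg_abs_div hb).comp_sub_right t).const_mul _
  rw [← integral_const_mul]
  exact setIntegral_mono (hdensity s).integrableOn ((hdensity s').const_mul _).integrableOn
    fun x => laplace_density_le_exp_mul hb.le x s s'

/-- Differential privacy of the Laplace mechanism: for every measurable set `A`,
the probability of landing in `A` under input `s` is at most `exp(|s − s'|/b)`
times the probability under input `s'`. -/
theorem laplace_mechanism_dp (b : ℝ) (hb : 0 < b) (s s' : ℝ) (A : Set ℝ)
    (hA : MeasurableSet A) :
    ∫ x in A, (1 / (2 * b)) * Real.exp (-|x - s| / b) ≤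
      Real.exp (|s - s'| / b) *
        ∫ x in A, (1 / (2 * b)) * Real.exp (-|x - s'| / b) :=
  laplace_mechanism_dp_general b hb s s' A
end

section
/- For every real ε > 0, every real α > 0, and every natural number n ≥ 1, the expected noise mean-squared error of the time-indexed Laplace mechanism satisfies (1/n)·∑_{i=1}^{n} 2/(ε²·(1 + α·i)²) ≤ 2/(n·α·ε²). -/
/-! The noise variances are dominated by a telescoping sum:
`1/(1+αi)² ≤ 1/((1+α(i-1))(1+αi)) = (1/(1+α(i-1)) - 1/(1+αi))/α`, so the total variance over
all `n` time points is at most `2/(αε²)`, whatever `n` is. -/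

open Finset

lemma sum_Icc_inv_one_add_mul_sq_le {α : ℝ} (hα : 0 < α) (n : ℕ) :
    ∑ i ∈ Icc 1 n, ((1 + α * i) ^ 2)⁻¹ ≤ n / (1 + α * n) := by
  induction n with
  | zero => simp
  | succ n ih =>
    rw [sum_Icc_succ_top (by omega)]
    have hn : (0 : ℝ) ≤ n := n.cast_nonneg
    have step : (n : ℝ) / (1 + α * n) + ((1 + α * (n + 1 : ℕ)) ^ 2)⁻¹ ≤
        (n + 1 : ℕ) / (1 + α * (n + 1 : ℕ)) := by
      push_cast
      rw [inv_eq_one_div, div_add_div _ _ (by positivity) (by positivity),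
        div_le_div_iff₀ (by positivity) (by positivity)]
      nlinarith [mul_nonneg hα.le hn, mul_nonneg (mul_nonneg hα.le hn) hn]
    linarith

lemma sum_Icc_inv_one_add_mul_sq_le_inv {α : ℝ} (hα : 0 < α) (n : ℕ) :
    ∑ i ∈ Icc 1 n, ((1 + α * i) ^ 2)⁻¹ ≤ α⁻¹ := by
  refine (sum_Icc_inv_one_add_mul_sq_le hα n).trans ?_
  rw [div_le_iff₀ (by positivity), inv_mul_eq_div, le_div_iff₀ hα]
  linarith

theorem dp_km_noise_mse_bound_general (ε α : ℝ) (hα : 0 < α)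
    (n : ℕ) :
    (1 / (n : ℝ)) * ∑ i ∈ Finset.Icc 1 n, 2 / (ε ^ 2 * (1 + α * (i : ℝ)) ^ 2) ≤
      2 / ((n : ℝ) * α * ε ^ 2) := by
  calc (1 / (n : ℝ)) * ∑ i ∈ Icc 1 n, 2 / (ε ^ 2 * (1 + α * (i : ℝ)) ^ 2)
      = 2 / (n * ε ^ 2) * ∑ i ∈ Icc 1 n, ((1 + α * i) ^ 2)⁻¹ := by
        simp only [mul_sum]
        refine sum_congr rfl fun i _ => ?_
        simp only [div_eq_mul_inv, mul_inv]
        ring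
    _ ≤ 2 / (n * ε ^ 2) * α⁻¹ := by
        gcongr
        exact sum_Icc_inv_one_add_mul_sq_le_inv hα n
    _ = 2 / ((n : ℝ) * α * ε ^ 2) := by ring

/-- The expected noise mean-squared error of the time-indexed Laplace
mechanism is at most `2/(n·α·ε²)`. -/
theorem dp_km_noise_mse_bound (ε α : ℝ) (hε : 0 < ε) (hα : 0 < α)
    (n : ℕ) (hn : 1 ≤ n) :
    (1 / (n : ℝ)) * ∑ i ∈ Finset.Icc 1 n, 2 / (ε ^ 2 * (1 + α * (i : ℝ)) ^ 2) ≤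
      2 / ((n : ℝ) * α * ε ^ 2) :=
  dp_km_noise_mse_bound_general ε α hα n
end

section
/- For every real ε > 0, every real α > 0, and every natural number n ≥ 1, if the total privacy budget is ε̂ = ε·(n+1)·(1 + α·n/2), then the expected noise mean-squared error satisfies (1/n)·∑_{i=1}^{n} 2/(ε²·(1 + α·i)²) ≤ 2·(n+1)²·(1 + α·n/2)² / (n·α·ε̂²). -/
/-! Since `1 + α i` grows by `α` at each step, `1 / (1 + α i)²` is dominated by the telescoping
difference `(1 / (1 + α (i - 1)) - 1 / (1 + α i)) / α`, so `∑_{i ≥ 1} 1 / (1 + α i)² ≤ 1 / α`.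
On the other side, `ε̂² = ε² (n + 1)² (1 + α n / 2)²`, so the right-hand side is just
`2 / (n α ε²)`, i.e. the bound `(1 / n) (2 / ε²) (1 / α)`. -/

open Finset

lemma one_div_sq_le_sub_one_div_div {a b : ℝ} (ha : 0 < a) (hab : a < b) :
    1 / b ^ 2 ≤ (1 / a - 1 / b) / (b - a) := by
  have hb : 0 < b := ha.trans hab
  have htele : (1 / a - 1 / b) / (b - a) = 1 / (a * b) := by
    field_simp [(sub_pos.mpr hab).ne']
  rw [htele, sq]
  gcongr

lemma sum_Icc_one_div_one_add_mul_sq_le {α : ℝ} (hα : 0 < α) (n : ℕ) :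
    ∑ i ∈ Icc 1 n, 1 / (1 + α * i) ^ 2 ≤ 1 / α := by
  set g : ℕ → ℝ := fun k => 1 / (1 + α * k)
  have hstep (k : ℕ) : 1 / (1 + α * ((k + 1 : ℕ) : ℝ)) ^ 2 ≤ (g k - g (k + 1)) / α := by
    have hlt : 1 + α * k < 1 + α * ((k + 1 : ℕ) : ℝ) := by push_cast; linarith
    have hgap : 1 + α * ((k + 1 : ℕ) : ℝ) - (1 + α * k) = α := by push_cast; ring
    simpa only [g, hgap] using one_div_sq_le_sub_one_div_div (by positivity) hlt
  calc ∑ i ∈ Icc 1 n, 1 / (1 + α * i) ^ 2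
      = ∑ k ∈ range n, 1 / (1 + α * ((k + 1 : ℕ) : ℝ)) ^ 2 := by
        rw [range_eq_Ico, sum_Ico_add' (fun i : ℕ => 1 / (1 + α * i) ^ 2) 0 n 1]; rfl
    _ ≤ ∑ k ∈ range n, (g k - g (k + 1)) / α := sum_le_sum fun k _ => hstep k
    _ = (1 - g n) / α := by rw [← sum_div, sum_range_sub']; simp [g]
    _ ≤ 1 / α := by
        gcongr
        exact sub_le_self _ (by positivity)

theorem dp_km_noise_mse_bound_total_budget_general (ε α : ℝ) (hα : 0 < α)
    (n : ℕ) (εhat : ℝ)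
    (hεhat : εhat = ε * ((n : ℝ) + 1) * (1 + α * (n : ℝ) / 2)) :
    (1 / (n : ℝ)) * ∑ i ∈ Finset.Icc 1 n, 2 / (ε ^ 2 * (1 + α * (i : ℝ)) ^ 2) ≤
      2 * ((n : ℝ) + 1) ^ 2 * (1 + α * (n : ℝ) / 2) ^ 2 /
        ((n : ℝ) * α * εhat ^ 2) := by
  have hscale : ((n : ℝ) + 1) ^ 2 * (1 + α * (n : ℝ) / 2) ^ 2 ≠ 0 := by positivity
  have hrhs : 2 * ((n : ℝ) + 1) ^ 2 * (1 + α * (n : ℝ) / 2) ^ 2 / ((n : ℝ) * α * εhat ^ 2)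
      = 1 / (n : ℝ) * (2 / ε ^ 2 * (1 / α)) := by
    rw [hεhat, mul_assoc 2, show (n : ℝ) * α * (ε * ((n : ℝ) + 1) * (1 + α * n / 2)) ^ 2
      = (n * α * ε ^ 2) * (((n : ℝ) + 1) ^ 2 * (1 + α * n / 2) ^ 2) by ring,
      mul_div_mul_right _ _ hscale]
    ring
  have hlhs : ∑ i ∈ Icc 1 n, 2 / (ε ^ 2 * (1 + α * (i : ℝ)) ^ 2)
      = 2 / ε ^ 2 * ∑ i ∈ Icc 1 n, 1 / (1 + α * (i : ℝ)) ^ 2 := by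
    rw [mul_sum]
    exact sum_congr rfl fun i _ => by rw [div_mul_div_comm, mul_one]
  rw [hrhs, hlhs]
  gcongr
  exact sum_Icc_one_div_one_add_mul_sq_le hα n

/-- The expected noise mean-squared error of the time-indexed Laplace
mechanism, expressed in terms of the total privacy budget
`ε̂ = ε·(n+1)·(1 + α·n/2)`. -/
theorem dp_km_noise_mse_bound_total_budget (ε α : ℝ) (hε : 0 < ε) (hα : 0 < α)
    (n : ℕ) (hn : 1 ≤ n) (εhat : ℝ)
    (hεhat : εhat = ε * ((n : ℝ) + 1) * (1 + α * (n : ℝ) / 2)) :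
    (1 / (n : ℝ)) * ∑ i ∈ Finset.Icc 1 n, 2 / (ε ^ 2 * (1 + α * (i : ℝ)) ^ 2) ≤
      2 * ((n : ℝ) + 1) ^ 2 * (1 + α * (n : ℝ) / 2) ^ 2 /
        ((n : ℝ) * α * εhat ^ 2) :=
  dp_km_noise_mse_bound_total_budget_general ε α hα n εhat hεhat
end
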